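/- Let B be a V-category superposed upon a V-category A, with composition ∘, units j_A : I → B(A,A), and mixed action morphisms •. Then there is an identity-on-objects V-functor S : A → B whose hom-morphisms S_{AB} : A(A,B) → B(A,B) are the composites •_{(AA)B} ∘ (j_A ⊗ 1) ∘ ℓ^{-1}, and these equal •_{A(BB)} ∘ (1 ⊗ j_B) ∘ r^{-1}. -/

import Mathlib

universe w v u u₁

open CategoryTheory MonoidalCategory

namespace Paper

variable (V : Type u) [Category.{v} V] [MonoidalCategory V]
variable {C : Type u₁} [EnrichedCategory V C]

/-- A `V`-category `B` superposed upon a `V`-category `A` (here the carrier of `A`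
is `C`): hom-objects `BHom`, composition `comp'` and units `j` making the objects
of `A` into a `V`-category, together with the mixed action morphisms
`actL = •_{A(BC)}` and `actR = •_{(AB)C}` encoding the `V`-functoriality of
`B(-,-) : A^op ⊗ A → V̲` and the extraordinary `V`-naturality of `comp'` and `j`. -/
structure Superposed where
  BHom : C → C → V
  j : ∀ A : C, 𝟙_ V ⟶ BHom A A
  comp' : ∀ A B C' : C, BHom A B ⊗ BHom B C' ⟶ BHom A C'
  actL : ∀ A B C' : C, (A ⟶[V] B) ⊗ BHom B C' ⟶ BHom A C'
  actR : ∀ A B C' : C, BHom A B ⊗ (B ⟶[V] C') ⟶ BHom A C'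
  -- `B` is a `V`-category
  id_comp : ∀ A B : C,
    (λ_ (BHom A B)).inv ≫ j A ▷ _ ≫ comp' A A B = 𝟙 (BHom A B)
  comp_id : ∀ A B : C,
    (ρ_ (BHom A B)).inv ≫ _ ◁ j B ≫ comp' A B B = 𝟙 (BHom A B)
  assoc : ∀ A B C' D : C,
    (α_ _ _ _).inv ≫ comp' A B C' ▷ _ ≫ comp' A C' D =
      _ ◁ comp' B C' D ≫ comp' A B D
  -- the actions are unital and associative over composition in `A`
  actL_id : ∀ A B : C,
    (λ_ (BHom A B)).inv ≫ eId V A ▷ _ ≫ actL A A B = 𝟙 (BHom A B)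
  actL_comp : ∀ A A' A'' B : C,
    (α_ _ _ _).inv ≫ eComp V A A' A'' ▷ _ ≫ actL A A'' B =
      _ ◁ actL A' A'' B ≫ actL A A' B
  actR_id : ∀ A B : C,
    (ρ_ (BHom A B)).inv ≫ _ ◁ eId V B ≫ actR A B B = 𝟙 (BHom A B)
  actR_comp : ∀ A B B' B'' : C,
    (α_ _ _ _).inv ≫ actR A B B' ▷ _ ≫ actR A B' B'' =
      _ ◁ eComp V B B' B'' ≫ actR A B B''
  -- the two actions commute, and are compatible with composition in `B`
  actL_actR : ∀ A A' B B' : C,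
    _ ◁ actR A' B B' ≫ actL A A' B' =
      (α_ ((A ⟶[V] A')) (BHom A' B) ((B ⟶[V] B'))).inv ≫
        actL A A' B ▷ _ ≫ actR A B B'
  actL_comp' : ∀ A A' B C' : C,
    _ ◁ comp' A' B C' ≫ actL A A' C' =
      (α_ ((A ⟶[V] A')) (BHom A' B) (BHom B C')).inv ≫
        actL A A' B ▷ _ ≫ comp' A B C'
  actR_comp' : ∀ A B C' C'' : C,
    _ ◁ actR B C' C'' ≫ comp' A B C'' =
      (α_ (BHom A B) (BHom B C') ((C' ⟶[V] C''))).inv ≫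
        comp' A B C' ▷ _ ≫ actR A C' C''
  -- extraordinary `V`-naturality of `j`
  j_extranatural : ∀ A B : C,
    (λ_ ((A ⟶[V] B))).inv ≫ j A ▷ _ ≫ actR A A B =
      (ρ_ ((A ⟶[V] B))).inv ≫ _ ◁ j B ≫ actL A B B

variable {V}

/-- The hom-morphisms of the induced identity-on-objects `V`-functor `S : A → B`. -/
def supS (S : Superposed V (C := C)) (A B : C) : (A ⟶[V] B) ⟶ S.BHom A B :=
  (λ_ ((A ⟶[V] B))).inv ≫ S.j A ▷ _ ≫ S.actR A A B

end Paper

/-!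
`S_{AB}` lets the unit `j_A` act from the right. Preservation of identities is the
interchange law (both `j_A` and the identity of `A` are maps out of `I`) followed by
unitality of the right action. For composition `M` of `A`, associativity of the right
action gives `S_{AC} ∘ M = •_{(AB)C} ∘ (S_{AB} ⊗ 1)`, and compatibility of `•_{(AB)C}` with
composition in `B`, together with the right unit law of `B`, gives
`•_{(AB)C} = ∘ ∘ (1 ⊗ S_{BC})`.
-/

namespace CategoryTheory.MonoidalCategory

variable {V : Type u} [Category.{v} V] [MonoidalCategory V]

theorem leftUnitor_inv_whiskerRight_eq_rightUnitor_inv_whiskerLeft {X Y : V}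
    (f : 𝟙_ V ⟶ X) (g : 𝟙_ V ⟶ Y) :
    g ≫ (λ_ Y).inv ≫ f ▷ Y = f ≫ (ρ_ X).inv ≫ X ◁ g := by
  rw [leftUnitor_inv_naturality_assoc, whisker_exchange, unitors_inv_equal,
    ← rightUnitor_inv_naturality_assoc]

theorem leftUnitor_inv_whiskerRight_tensor {X Y Z : V} (f : 𝟙_ V ⟶ X) :
    (λ_ (Y ⊗ Z)).inv ≫ f ▷ (Y ⊗ Z) ≫ (α_ X Y Z).inv = ((λ_ Y).inv ≫ f ▷ Y) ▷ Z := by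
  monoidal

theorem whiskerLeft_leftUnitor_inv_whiskerRight {X Y Z : V} (f : 𝟙_ V ⟶ Y) :
    X ◁ (λ_ Z).inv ≫ X ◁ (f ▷ Z) ≫ (α_ X Y Z).inv = ((ρ_ X).inv ≫ X ◁ f) ▷ Z := by
  monoidal

end CategoryTheory.MonoidalCategory

namespace Paper.Superposed

variable {V : Type u} [Category.{v} V] [MonoidalCategory V]
  {C : Type u₁} [EnrichedCategory V C] (S : Superposed V (C := C))

theorem eId_comp_supS (A : C) : eId V A ≫ supS S A A = S.j A := by
  rw [supS, reassoc_of% leftUnitor_inv_whiskerRight_eq_rightUnitor_inv_whiskerLeft, S.actR_id,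
    Category.comp_id]

theorem eComp_comp_supS (A B C' : C) :
    eComp V A B C' ≫ supS S A C' = supS S A B ▷ (B ⟶[V] C') ≫ S.actR A B C' := by
  rw [supS, leftUnitor_inv_naturality_assoc, whisker_exchange_assoc, ← S.actR_comp,
    reassoc_of% leftUnitor_inv_whiskerRight_tensor, ← comp_whiskerRight_assoc, supS,
    Category.assoc]

theorem whiskerLeft_supS_comp' (A B C' : C) :
    S.BHom A B ◁ supS S B C' ≫ S.comp' A B C' = S.actR A B C' := by
  rw [supS, MonoidalCategory.whiskerLeft_comp_assoc, MonoidalCategory.whiskerLeft_comp_assoc,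
    S.actR_comp', reassoc_of% whiskerLeft_leftUnitor_inv_whiskerRight, ← comp_whiskerRight_assoc,
    Category.assoc, S.comp_id, id_whiskerRight, Category.id_comp]

end Paper.Superposed

open Paper MonoidalCategory CategoryTheory in
/-- Let `B` be a `V`-category superposed upon a `V`-category `A`.
Then there is an identity-on-objects `V`-functor `S : A → B` whose hom-morphisms
are the composites `•_{(AA)B} ∘ (j_A ⊗ 1) ∘ ℓ⁻¹`, and these equal
`•_{A(BB)} ∘ (1 ⊗ j_B) ∘ r⁻¹`; `S` preserves identities and composition. -/
theorem superposed_induces_enriched_functor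
    (V : Type u) [Category.{v} V] [MonoidalCategory V]
    (C : Type u₁) [EnrichedCategory V C] (S : Superposed V (C := C)) :
    -- the two descriptions of `S` agree
    (∀ A B : C,
      supS S A B =
        (ρ_ ((A ⟶[V] B))).inv ≫ _ ◁ S.j B ≫ S.actL A B B) ∧
    -- `S` is an (identity-on-objects) `V`-functor: it preserves identities
    (∀ A : C, eId V A ≫ supS S A A = S.j A) ∧
    -- and composition
    (∀ A B C' : C,
      eComp V A B C' ≫ supS S A C' =
        (supS S A B ⊗ₘ supS S B C') ≫ S.comp' A B C') := by
  refine ⟨S.j_extranatural, S.eId_comp_supS, fun A B C' => ?_⟩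
  rw [S.eComp_comp_supS, MonoidalCategory.tensorHom_def, Category.assoc, S.whiskerLeft_supS_comp']
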